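/- Let C be a neighbour-transitive code in K(n,k) with minimum distance δ ≥ 3, with 2 ≤ k and 2k + 2 ≤ n (so K(n,k) is not an odd graph), and suppose Aut(C) acts transitively on Ω. Then Aut(C) acts 2-homogeneously on Ω, i.e. transitively on the 2-element subsets of Ω. -/

import Mathlib

open Finset

abbrev KVert (Ω : Type*) [DecidableEq Ω] (k : ℕ) := {s : Finset Ω // s.card = k}

def kneser (Ω : Type*) [DecidableEq Ω] (k : ℕ) : SimpleGraph (KVert Ω k) where
  Adj a b := a ≠ b ∧ Disjoint a.1 b.1
  symm := ⟨fun a b h => ⟨h.1.symm, h.2.symm⟩⟩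
  loopless := ⟨fun a h => h.1 rfl⟩

/-- The action of a permutation of `Ω` on the vertices of the Kneser graph. -/
def permV {Ω : Type*} [DecidableEq Ω] {k : ℕ} (g : Equiv.Perm Ω) (a : KVert Ω k) : KVert Ω k :=
  ⟨a.1.map g.toEmbedding, by simp [a.2]⟩

/-- The setwise stabiliser of a code `C` inside `Sym(Ω)`. -/
def autC {Ω : Type*} [DecidableEq Ω] {k : ℕ} (C : Set (KVert Ω k)) : Set (Equiv.Perm Ω) :=
  {g | (permV g) '' C = C}

/-- `nbrs C i` is `Cᵢ`, the set of vertices at distance exactly `i` from the code `C`. -/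
def nbrs {Ω : Type*} [Fintype Ω] [DecidableEq Ω] {k : ℕ} (C : Set (KVert Ω k)) (i : ℕ) :
    Set (KVert Ω k) :=
  {γ | (∃ α ∈ C, (kneser Ω k).dist α γ = i) ∧ ∀ β ∈ C, i ≤ (kneser Ω k).dist β γ}

/-- `G` acts transitively on the set of vertices `S`. -/
def transOn {Ω : Type*} [DecidableEq Ω] {k : ℕ} (G : Set (Equiv.Perm Ω))
    (S : Set (KVert Ω k)) : Prop :=
  ∀ x ∈ S, ∀ y ∈ S, ∃ g ∈ G, permV g x = y

/-!
Fix a codeword `α` and let `H` be its stabiliser in `Aut(C)`. Two `k`-subsets `A`, `B` of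
`Ω \ α` are neighbours of `α`, so they lie in `C₁`, and an automorphism carrying `A` to `B`
fixes `α`, because `δ ≥ 3` makes `α` the only codeword adjacent to `B`. Hence `H` is
`k`-homogeneous on `Ω \ α`, a set of size `n - k ≥ k + 2`, and a counting argument shows it is
then `2`-homogeneous there: for an `H`-invariant family `F` of pairs, the number of pairs of `F`
inside a `k`-subset is constant, so the number of `F`-partners of a point in a `(k-1)`-set `S`
does not depend on the point outside `S`.

For the theorem, double counting with the transitivity on `Ω` gives, as `n > 2k`, codewords
`α ∌ u, v` and `β ∌ u', v'`; transitivity on `C` moves `β` to `α`, and `H` does the rest.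
-/

open Pointwise

section Homogeneous

variable {G α : Type*} [Group G] [MulAction G α] [DecidableEq α]

def IsHomogeneousOn (H : Subgroup G) (X : Finset α) (j : ℕ) : Prop :=
  ∀ A ⊆ X, ∀ B ⊆ X, #A = j → #B = j → ∃ g ∈ H, g • A = B

variable (F : Finset α → Prop) [DecidablePred F]

def numPairs (A : Finset α) : ℕ := #{q ∈ A.powersetCard 2 | F q}

def numPartners (x : α) (S : Finset α) : ℕ := #{z ∈ S | F {x, z}}

variable {F}

lemma numPairs_smul {g : G} (hF : ∀ q, F (g • q) ↔ F q) (A : Finset α) :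
    numPairs F (g • A) = numPairs F A :=
  (card_equiv (MulAction.toPerm g) fun q => by
    simp [mem_powersetCard, smul_finset_subset_smul_finset_iff, card_smul_finset, hF]).symm

lemma numPairs_insert {x : α} {S : Finset α} (hx : x ∉ S) :
    numPairs F (insert x S) = numPairs F S + numPartners F x S := by
  have hdisj : Disjoint (S.powersetCard 2) ((S.powersetCard 1).image (insert x)) := by
    simp only [disjoint_left, mem_powersetCard, mem_image]
    rintro _ ⟨hsub, -⟩ ⟨r, -, rfl⟩
    exact hx (hsub (mem_insert_self x r))
  have hpartners : ((S.powersetCard 1).image (insert x)).filter F = {z ∈ S | F {x, z}}.image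
      fun z => {x, z} := by
    rw [powersetCard_one, map_eq_image, image_image, filter_image]
    rfl
  rw [numPairs, numPairs, powersetCard_succ_insert hx, filter_union,
    card_union_of_disjoint (disjoint_filter_filter hdisj), hpartners, card_image_of_injOn]
  · rfl
  · intro z hz z' _ h
    have hzS : z ∈ S := (mem_filter.mp hz).1
    have : z ∈ ({x, z'} : Finset α) := by simp only at h; rw [← h]; simp
    rcases mem_insert.mp this with rfl | h'
    · exact absurd hzS hx
    · exact mem_singleton.mp h'

lemma numPartners_insert {x z : α} {T : Finset α} (hz : z ∉ T) :
    numPartners F x (insert z T) = numPartners F x T + if F {x, z} then 1 else 0 := by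
  rw [numPartners, numPartners, filter_insert]
  split_ifs
  · exact card_insert_of_notMem (by simp [hz])
  · rfl

variable {H : Subgroup G} {X : Finset α} {k : ℕ}

namespace IsHomogeneousOn

variable (hH : IsHomogeneousOn H X k) (hF : ∀ g ∈ H, ∀ q, F (g • q) ↔ F q)
include hH hF

lemma numPartners_eq {S : Finset α} (hS : S ⊆ X) (hSk : #S + 1 = k) {x y : α}
    (hx : x ∈ X) (hy : y ∈ X) (hxS : x ∉ S) (hyS : y ∉ S) :
    numPartners F x S = numPartners F y S := by
  obtain ⟨g, hg, hxy⟩ := hH (insert x S) (insert_subset hx hS) (insert y S)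
    (insert_subset hy hS) (by rw [card_insert_of_notMem hxS, hSk])
    (by rw [card_insert_of_notMem hyS, hSk])
  have := numPairs_smul (hF g hg) (insert x S)
  rw [hxy, numPairs_insert hxS, numPairs_insert hyS] at this
  omega

-- Comparing the partner counts of `x` and `y` in `T ∪ {z}` and in `T ∪ {w}` gives, in Iverson
-- brackets, `[F {x, z}] - [F {x, w}] = [F {y, z}] - [F {y, w}]`.
lemma pair_mem_and_not_of_pair_mem_and_not (hk : 2 ≤ k) (hX : k + 2 ≤ #X) {x y z w : α}
    (hx : x ∈ X) (hy : y ∈ X) (hz : z ∈ X) (hw : w ∈ X) (hxz : x ≠ z) (hxw : x ≠ w)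
    (hyz : y ≠ z) (hyw : y ≠ w)
    (hFxz : F {x, z}) (hFxw : ¬F {x, w}) : F {y, z} ∧ ¬F {y, w} := by
  obtain ⟨T, hT, hTk⟩ := exists_subset_card_eq (s := X \ {x, y, z, w}) (n := k - 2) (by
    have := le_card_sdiff {x, y, z, w} X
    have := card_le_four (a := x) (b := y) (c := z) (d := w)
    omega)
  have hTX : T ⊆ X := hT.trans sdiff_subset
  have hTout : ∀ a ∈ ({x, y, z, w} : Finset α), a ∉ T := fun a ha haT =>
    (mem_sdiff.mp (hT haT)).2 ha
  simp only [mem_insert, mem_singleton, forall_eq_or_imp, forall_eq] at hTout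
  obtain ⟨hxT, hyT, hzT, hwT⟩ := hTout
  have e1 := hH.numPartners_eq hF (insert_subset hz hTX)
    (by rw [card_insert_of_notMem hzT]; omega) hx hy (by simp [hxz, hxT]) (by simp [hyz, hyT])
  have e2 := hH.numPartners_eq hF (insert_subset hw hTX)
    (by rw [card_insert_of_notMem hwT]; omega) hx hy (by simp [hxw, hxT]) (by simp [hyw, hyT])
  rw [numPartners_insert hzT, numPartners_insert hzT] at e1
  rw [numPartners_insert hwT, numPartners_insert hwT] at e2
  split_ifs at e1 e2 <;> first | omega | exact ⟨‹_›, ‹_›⟩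

-- Otherwise every point of a `(k-1)`-set `S` avoiding `z, w` is a partner of `z` and none is a
-- partner of `w`, against `numPartners_eq`.
lemma pair_mem_of_pair_mem (hk : 2 ≤ k) (hX : k + 2 ≤ #X) {x z w : α} (hx : x ∈ X)
    (hz : z ∈ X) (hw : w ∈ X) (hxz : x ≠ z) (hxw : x ≠ w) (hFxz : F {x, z}) : F {x, w} := by
  by_contra hFxw
  obtain ⟨S, hS, hSk⟩ := exists_subset_card_eq (s := X \ {z, w}) (n := k - 1) (by
    have := le_card_sdiff {z, w} X
    have := card_le_two (a := z) (b := w)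
    omega)
  have hSX : S ⊆ X := hS.trans sdiff_subset
  have hzS : z ∉ S := fun h => (mem_sdiff.mp (hS h)).2 (by simp)
  have hwS : w ∉ S := fun h => (mem_sdiff.mp (hS h)).2 (by simp)
  have hlink : ∀ y ∈ S, F {z, y} ∧ ¬F {w, y} := fun y hy => by
    rw [pair_comm z, pair_comm w]
    exact hH.pair_mem_and_not_of_pair_mem_and_not hF hk hX hx (hSX hy) hz hw hxz hxw
      (fun h => hzS (h ▸ hy)) (fun h => hwS (h ▸ hy)) hFxz hFxw
  have := hH.numPartners_eq hF hSX (by omega) hz hw hzS hwS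
  rw [numPartners, numPartners, filter_true_of_mem fun y hy => (hlink y hy).1,
    filter_false_of_mem fun y hy => (hlink y hy).2, card_empty] at this
  omega

end IsHomogeneousOn

lemma IsHomogeneousOn.isHomogeneousOn_two (hk : 2 ≤ k) (hX : k + 2 ≤ #X)
    (hH : IsHomogeneousOn H X k) : IsHomogeneousOn H X 2 := by
  classical
  intro A hA B hB hA2 hB2
  obtain ⟨u, v, huv, rfl⟩ := card_eq_two.mp hA2
  obtain ⟨s, t, hst, rfl⟩ := card_eq_two.mp hB2
  let F : Finset α → Prop := fun q => ∃ h ∈ H, h • {u, v} = q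
  have hF : ∀ g ∈ H, ∀ q, F (g • q) ↔ F q := by
    refine fun g hg q => ⟨fun ⟨h, hh, e⟩ => ⟨g⁻¹ * h, mul_mem (inv_mem hg) hh, ?_⟩,
      fun ⟨h, hh, e⟩ => ⟨g * h, mul_mem hg hh, ?_⟩⟩
    · rw [mul_smul, e, inv_smul_smul]
    · rw [mul_smul, e]
  have step {x z w : α} := hH.pair_mem_of_pair_mem hF hk hX (x := x) (z := z) (w := w)
  obtain ⟨hu, hv⟩ : u ∈ X ∧ v ∈ X := by simpa [insert_subset_iff] using hA
  obtain ⟨hs, ht⟩ : s ∈ X ∧ t ∈ X := by simpa [insert_subset_iff] using hB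
  have huv' : F {u, v} := ⟨1, one_mem H, one_smul G _⟩
  by_cases htu : t = u
  · subst htu
    rw [pair_comm s]
    exact step ht hv hs huv hst.symm huv'
  · have hut := step hu hv ht huv (Ne.symm htu) huv'
    rw [pair_comm] at hut
    rw [pair_comm s]
    exact step ht hu hs htu hst.symm hut

end Homogeneous

lemma Finset.exists_notMem_notMem_of_regular {ι α : Type*} [Fintype α] [DecidableEq α]
    {I : Finset ι} (s : ι → Finset α) {k r : ℕ} (hI : I.Nonempty) (hk : ∀ i ∈ I, #(s i) = k)
    (hr : ∀ x, #{i ∈ I | x ∈ s i} = r) (hn : 2 * k < Fintype.card α) (u v : α) :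
    ∃ i ∈ I, u ∉ s i ∧ v ∉ s i := by
  classical
  by_contra! hcover
  have hcount : #I * k = Fintype.card α * r :=
    card_mul_eq_card_mul (fun i x => x ∈ s i) (t := univ)
      (fun i hi => by simpa [bipartiteAbove] using hk i hi) (fun x _ => hr x)
  have hI2 : #I ≤ 2 * r := calc
    #I ≤ #({i ∈ I | u ∈ s i} ∪ {i ∈ I | v ∈ s i}) := card_le_card fun i hi => by
      by_cases hu : u ∈ s i <;> simp [hi, hu, hcover i hi]
    _ ≤ 2 * r := (card_union_le _ _).trans_eq (by rw [hr u, hr v, two_mul])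
  have := hI.card_pos
  nlinarith

section Kneser

variable {Ω : Type*} [DecidableEq Ω] {k : ℕ}

lemma Finset.map_toEmbedding_eq_smul (g : Equiv.Perm Ω) (s : Finset Ω) :
    s.map g.toEmbedding = g • s := by
  rw [map_eq_image, smul_finset_def]
  rfl

-- For this action `autC C` is, by definition, `MulAction.stabilizer (Equiv.Perm Ω) C`.
instance : MulAction (Equiv.Perm Ω) (KVert Ω k) where
  smul := permV
  one_smul a := Subtype.ext (map_refl (s := a.1))
  mul_smul g h a := Subtype.ext (map_map h.toEmbedding g.toEmbedding a.1).symm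

lemma KVert.coe_smul (g : Equiv.Perm Ω) (a : KVert Ω k) : (g • a).1 = g • a.1 :=
  map_toEmbedding_eq_smul g a.1

lemma kneser_adj_smul (g : Equiv.Perm Ω) {a b : KVert Ω k} :
    (kneser Ω k).Adj (g • a) (g • b) ↔ (kneser Ω k).Adj a b := by
  show g • a ≠ g • b ∧ Disjoint (a.1.map _) (b.1.map _) ↔ _
  rw [ne_eq, smul_left_cancel_iff, disjoint_map]
  rfl

lemma kneser_adj_of_disjoint (hk : 0 < k) {a b : KVert Ω k} (h : Disjoint a.1 b.1) :
    (kneser Ω k).Adj a b := by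
  refine ⟨fun hab => ?_, h⟩
  rw [hab, disjoint_self_iff_empty] at h
  have := b.2
  simp [h] at this
  omega

lemma smul_mem_iff_of_mem_autC {C : Set (KVert Ω k)} {g : Equiv.Perm Ω} (hg : g ∈ autC C)
    {a : KVert Ω k} : g • a ∈ C ↔ a ∈ C := by
  have hgC : g • C = C := hg
  nth_rewrite 1 [← hgC]
  exact Set.smul_mem_smul_set_iff

lemma eq_of_adj_of_adj {C : Set (KVert Ω k)}
    (hdelta : ∀ α ∈ C, ∀ β ∈ C, α ≠ β → 3 ≤ (kneser Ω k).dist α β) {α β γ : KVert Ω k}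
    (hα : α ∈ C) (hβ : β ∈ C) (hαγ : (kneser Ω k).Adj α γ) (hβγ : (kneser Ω k).Adj β γ) :
    α = β := by
  by_contra hne
  have hfar := hdelta α hα β hβ hne
  have hnear : (kneser Ω k).dist α β ≤ 2 :=
    (kneser Ω k).dist_le (.cons hαγ (.cons hβγ.symm .nil))
  omega

end Kneser

section Code

variable {Ω : Type*} [Fintype Ω] [DecidableEq Ω] {k : ℕ} {C : Set (KVert Ω k)}

lemma exists_codeword_notMem_notMem (hn : 2 * k < Fintype.card Ω) (hC : C.Nonempty)
    (htrans : ∀ x y : Ω, ∃ g ∈ autC C, g x = y) (u v : Ω) :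
    ∃ α ∈ C, u ∉ α.1 ∧ v ∉ α.1 := by
  classical
  have hregular : ∀ x, #{a ∈ C.toFinset | x ∈ a.1} = #{a ∈ C.toFinset | u ∈ a.1} := by
    intro x
    obtain ⟨g, hg, rfl⟩ := htrans u x
    refine (card_equiv (MulAction.toPerm g) fun a => ?_).symm
    rw [mem_filter, mem_filter, Set.mem_toFinset, Set.mem_toFinset, MulAction.toPerm_apply,
      smul_mem_iff_of_mem_autC hg, KVert.coe_smul, ← Equiv.Perm.smul_def,
      smul_mem_smul_finset_iff]
  simpa using exists_notMem_notMem_of_regular (I := C.toFinset) Subtype.val (by simpa using hC)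
    (fun a _ => a.2) hregular hn u v

variable (hdelta : ∀ α ∈ C, ∀ β ∈ C, α ≠ β → 3 ≤ (kneser Ω k).dist α β)
include hdelta

lemma mem_nbrs_one_of_adj {α γ : KVert Ω k} (hα : α ∈ C) (hαγ : (kneser Ω k).Adj α γ) :
    γ ∈ nbrs C 1 := by
  have hdist : (kneser Ω k).dist α γ = 1 := SimpleGraph.dist_eq_one_iff_adj.mpr hαγ
  have hγ : γ ∉ C := fun hγ => by have := hdelta α hα γ hγ hαγ.ne; omega
  refine ⟨⟨α, hα, hdist⟩, fun β hβ => ?_⟩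
  have hβα : (kneser Ω k).Reachable β α := by
    by_cases h : β = α
    · exact h ▸ .refl β
    · exact .of_dist_ne_zero (by have := hdelta β hβ α hα h; omega)
  exact (hβα.trans hαγ.reachable).pos_dist_of_ne fun h => hγ (h ▸ hβ)

lemma isHomogeneousOn_compl (hk : 0 < k) (h1 : transOn (autC C) (nbrs C 1)) {α : KVert Ω k}
    (hα : α ∈ C) :
    IsHomogeneousOn (MulAction.stabilizer (Equiv.Perm Ω) C ⊓
      MulAction.stabilizer (Equiv.Perm Ω) α) α.1ᶜ k := by
  intro A hA B hB hAk hBk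
  have hαA : (kneser Ω k).Adj α ⟨A, hAk⟩ :=
    kneser_adj_of_disjoint hk (subset_compl_iff_disjoint_right.mp hA).symm
  have hαB : (kneser Ω k).Adj α ⟨B, hBk⟩ :=
    kneser_adj_of_disjoint hk (subset_compl_iff_disjoint_right.mp hB).symm
  obtain ⟨g, hg, hgAB⟩ := h1 _ (mem_nbrs_one_of_adj hdelta hα hαA) _
    (mem_nbrs_one_of_adj hdelta hα hαB)
  have hgα : g • α = α := eq_of_adj_of_adj hdelta ((smul_mem_iff_of_mem_autC hg).mpr hα) hα
    (hgAB ▸ (kneser_adj_smul g).mpr hαA) hαB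
  exact ⟨g, ⟨hg, hgα⟩, (KVert.coe_smul g _).symm.trans (congrArg Subtype.val hgAB)⟩

end Code

/-- a neighbour-transitive code with minimum distance at least 3 in a
non-odd Kneser graph, whose automorphism group is transitive on `Ω`, has `Aut(C)`
acting 2-homogeneously on `Ω`. -/
theorem stmt13 {Ω : Type*} [Fintype Ω] [DecidableEq Ω] {n k : ℕ}
    (hcard : Fintype.card Ω = n) (hk : 2 ≤ k) (hn : 2 * k + 2 ≤ n)
    (C : Set (KVert Ω k)) (hC : C.Nontrivial)
    (h0 : transOn (autC C) C) (h1 : transOn (autC C) (nbrs C 1))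
    (hdelta : ∀ α ∈ C, ∀ β ∈ C, α ≠ β → 3 ≤ (kneser Ω k).dist α β)
    (htransΩ : ∀ x y : Ω, ∃ g ∈ autC C, g x = y) :
    ∀ u v u' v' : Ω, u ≠ v → u' ≠ v' →
      ∃ g ∈ autC C, ({u, v} : Finset Ω).map g.toEmbedding = {u', v'} := by
  intro u v u' v' huv hu'v'
  have hn' : 2 * k < Fintype.card Ω := by omega
  obtain ⟨β, hβ, hu', hv'⟩ := exists_codeword_notMem_notMem hn' hC.nonempty htransΩ u' v'
  obtain ⟨α, hα, hu, hv⟩ := exists_codeword_notMem_notMem hn' hC.nonempty htransΩ u v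
  obtain ⟨g, hg, hgβ⟩ := h0 β hβ α hα
  change g • β = α at hgβ
  have hcompl : k + 2 ≤ #α.1ᶜ := by rw [card_compl, α.2]; omega
  obtain ⟨h, ⟨hhC, -⟩, hh⟩ :=
    (isHomogeneousOn_compl hdelta (by omega) h1 hα).isHomogeneousOn_two hk hcompl
    {u, v} (by simp [insert_subset_iff, hu, hv]) (g • {u', v'})
    (by
      rw [← hgβ, KVert.coe_smul, smul_finset_insert, smul_finset_singleton, insert_subset_iff,
        singleton_subset_iff, mem_compl, mem_compl, smul_mem_smul_finset_iff,
        smul_mem_smul_finset_iff]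
      exact ⟨hu', hv'⟩) (card_pair huv)
    (by rw [card_smul_finset, card_pair hu'v'])
  refine ⟨g⁻¹ * h, Subgroup.mul_mem _ (Subgroup.inv_mem _ hg) hhC, ?_⟩
  rw [map_toEmbedding_eq_smul, mul_smul, hh, inv_smul_smul]
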